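/- arXiv:2206.09163 — 7 statements merged into one kernel-verified Lean document; each statement's English description precedes it below -/
import Mathlib

section
/- For all a, b ∈ R^n with n ≥ 2, the inequalities dist(a,b) ≤ d_△(a,b) ≤ (n-1)·dist(a,b) hold. -/
/-! With `c = b - a`, both quantities are expressed through the gaps `c i - min c ≥ 0`:
`dist(a, b)` is the largest gap and `d_△(a, b)` is the sum of all gaps. The sum dominates its
largest term, and since the gap at a minimiser of `c` vanishes, it has at most `n - 1` nonzero
terms, each bounded by the largest gap. -/

noncomputable def tmin {n : ℕ} [NeZero n] (f : Fin n → ℝ) : ℝ :=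
  Finset.univ.inf' Finset.univ_nonempty f

noncomputable def tmax {n : ℕ} [NeZero n] (f : Fin n → ℝ) : ℝ :=
  Finset.univ.sup' Finset.univ_nonempty f

noncomputable def dtri {n : ℕ} [NeZero n] (a b : Fin n → ℝ) : ℝ :=
  (∑ i, (b i - a i)) - n * tmin (fun i => b i - a i)

noncomputable def tdist {n : ℕ} [NeZero n] (a b : Fin n → ℝ) : ℝ :=
  tmax (fun i => a i - b i) - tmin (fun j => a j - b j)

section

variable {n : ℕ} [NeZero n] (f : Fin n → ℝ)

lemma tmin_le (i : Fin n) : tmin f ≤ f i :=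
  Finset.inf'_le f (Finset.mem_univ i)

lemma le_tmax (i : Fin n) : f i ≤ tmax f :=
  Finset.le_sup' f (Finset.mem_univ i)

lemma exists_tmin_eq : ∃ k, tmin f = f k := by
  obtain ⟨k, -, hk⟩ := Finset.exists_mem_eq_inf' Finset.univ_nonempty f
  exact ⟨k, hk⟩

lemma exists_tmax_eq : ∃ k, tmax f = f k := by
  obtain ⟨k, -, hk⟩ := Finset.exists_mem_eq_sup' Finset.univ_nonempty f
  exact ⟨k, hk⟩

lemma tmax_neg : tmax (-f) = -tmin f := by
  obtain ⟨k, hk⟩ := exists_tmin_eq f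
  refine le_antisymm (Finset.sup'_le _ _ fun i _ => neg_le_neg (tmin_le f i)) ?_
  rw [hk]
  exact le_tmax (-f) k

lemma tmin_neg : tmin (-f) = -tmax f := by
  rw [← neg_neg (tmin (-f)), ← tmax_neg, neg_neg]

lemma tmax_sub_tmin_le_sum_sub_tmin : tmax f - tmin f ≤ ∑ i, (f i - tmin f) := by
  obtain ⟨j, hj⟩ := exists_tmax_eq f
  rw [hj]
  exact Finset.single_le_sum (fun i _ => sub_nonneg.2 (tmin_le f i)) (Finset.mem_univ j)

lemma sum_sub_tmin_le_mul_tmax_sub_tmin :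
    ∑ i, (f i - tmin f) ≤ ((n : ℝ) - 1) * (tmax f - tmin f) := by
  obtain ⟨k, hk⟩ := exists_tmin_eq f
  have hgap_k : f k - tmin f = 0 := by rw [hk, sub_self]
  have hcard : ((Finset.univ.erase k).card : ℝ) = n - 1 := by
    rw [Finset.card_erase_of_mem (Finset.mem_univ k), Finset.card_univ, Fintype.card_fin,
      Nat.cast_pred (Nat.pos_of_ne_zero (NeZero.ne n))]
  calc ∑ i, (f i - tmin f) = ∑ i ∈ Finset.univ.erase k, (f i - tmin f) :=
        (Finset.sum_erase (f := fun i => f i - tmin f) _ hgap_k).symm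
    _ ≤ (Finset.univ.erase k).card • (tmax f - tmin f) :=
        Finset.sum_le_card_nsmul _ _ _ fun i _ => sub_le_sub_right (le_tmax f i) _
    _ = ((n : ℝ) - 1) * (tmax f - tmin f) := by rw [nsmul_eq_mul, hcard]

end

lemma tdist_eq {n : ℕ} [NeZero n] (a b : Fin n → ℝ) :
    tdist a b = tmax (b - a) - tmin (b - a) := by
  have hneg : (fun i => a i - b i) = -(b - a) := by
    ext i
    simp
  rw [tdist, hneg, tmax_neg, tmin_neg, neg_sub_neg]

lemma dtri_eq {n : ℕ} [NeZero n] (a b : Fin n → ℝ) :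
    dtri a b = ∑ i, ((b - a) i - tmin (b - a)) := by
  rw [Finset.sum_sub_distrib, Finset.sum_const, Finset.card_univ, Fintype.card_fin,
    nsmul_eq_mul]
  rfl

theorem stmt4_general {n : ℕ} [NeZero n] (a b : Fin n → ℝ) :
    tdist a b ≤ dtri a b ∧ dtri a b ≤ ((n : ℝ) - 1) * tdist a b := by
  rw [tdist_eq, dtri_eq]
  exact ⟨tmax_sub_tmin_le_sum_sub_tmin _, sum_sub_tmin_le_mul_tmax_sub_tmin _⟩

theorem stmt4 {n : ℕ} [NeZero n] (hn : 2 ≤ n) (a b : Fin n → ℝ) :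
    tdist a b ≤ dtri a b ∧ dtri a b ≤ ((n : ℝ) - 1) * tdist a b :=
  stmt4_general a b
end

section
/- For distinct points a, b in H = {x ∈ R^n : Σ x_i = 0}, the set h(a,b) = {x ∈ H : d_△(x,a) ≤ d_△(x,b)} equals {x ∈ H : max_{i∈I}(x_i - a_i) ≤ max_{j∉I}(x_j - b_j)} where I = {i : a_i < b_i}; in particular h(a,b) is a max-tropical halfspace. -/
open Finset in
private lemma neg_inf' {α : Type*} (s : Finset α) (hs : s.Nonempty) (f : α → ℝ) :
    -(s.inf' hs f) = s.sup' hs (fun i => -f i) := by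
  apply le_antisymm
  · obtain ⟨i, hi, hix⟩ := Finset.exists_mem_eq_inf' hs f
    rw [hix]
    exact Finset.le_sup' (fun i => -f i) hi
  · rw [Finset.sup'_le_iff]
    intro i hi
    simp only [neg_le_neg_iff]
    exact Finset.inf'_le f hi

open Finset in
theorem stmt6 {n : ℕ} [NeZero n] (a b : Fin n → ℝ)
    (ha : ∑ i, a i = 0) (hb : ∑ i, b i = 0) (hab : a ≠ b) :
    ∃ (hI : (Finset.univ.filter (fun i => a i < b i)).Nonempty)
      (hJ : ((Finset.univ.filter (fun i => a i < b i))ᶜ).Nonempty),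
      {x : Fin n → ℝ | (∑ i, x i = 0) ∧ dtri x a ≤ dtri x b} =
        {x : Fin n → ℝ | (∑ i, x i = 0) ∧
          (Finset.univ.filter (fun i => a i < b i)).sup' hI (fun i => x i - a i) ≤
            ((Finset.univ.filter (fun i => a i < b i))ᶜ).sup' hJ (fun j => x j - b j)} := by
  set I := Finset.univ.filter (fun i => a i < b i) with hIdef
  have hmemI : ∀ i, i ∈ I ↔ a i < b i := by
    intro i; simp [hIdef]
  have hmemJ : ∀ i, i ∈ Iᶜ ↔ b i ≤ a i := by
    intro i; simp [hIdef, not_lt]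
  have hI : I.Nonempty := by
    by_contra h
    rw [Finset.not_nonempty_iff_eq_empty] at h
    have hle : ∀ i, b i ≤ a i := by
      intro i
      have : i ∈ Iᶜ := by rw [h]; simp
      exact (hmemJ i).1 this
    have hs : ∑ i, (a i - b i) = 0 := by rw [Finset.sum_sub_distrib, ha, hb]; ring
    have hz := (Finset.sum_eq_zero_iff_of_nonneg
      (fun i _ => sub_nonneg.2 (hle i))).1 hs
    apply hab
    funext i
    have := hz i (mem_univ i)
    linarith
  have hJ : Iᶜ.Nonempty := by
    by_contra h
    rw [Finset.not_nonempty_iff_eq_empty, Finset.compl_eq_empty_iff] at h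
    have hlt : ∀ i, a i < b i := by
      intro i
      exact (hmemI i).1 (by rw [h]; exact mem_univ i)
    have : ∑ i, a i < ∑ i, b i :=
      Finset.sum_lt_sum_of_nonempty univ_nonempty (fun i _ => hlt i)
    linarith
  refine ⟨hI, hJ, ?_⟩
  ext x
  simp only [Set.mem_setOf_eq]
  refine and_congr_right fun hx => ?_
  have hn : (0:ℝ) < n := by exact_mod_cast (NeZero.pos n)
  have key : ∀ c : Fin n → ℝ, (∑ i, c i = 0) →
      dtri x c = -(n * tmin (fun i => c i - x i)) := by
    intro c hc
    unfold dtri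
    rw [Finset.sum_sub_distrib, hc, hx]
    ring
  rw [key a ha, key b hb]
  have step1 : -(↑n * tmin (fun i => a i - x i)) ≤ -(↑n * tmin (fun i => b i - x i)) ↔
      tmin (fun i => b i - x i) ≤ tmin (fun i => a i - x i) := by
    rw [neg_le_neg_iff]
    exact mul_le_mul_iff_right₀ hn
  rw [step1]
  have step2 : ∀ c : Fin n → ℝ, tmin (fun i => c i - x i) =
      -(Finset.univ.sup' univ_nonempty (fun i => x i - c i)) := by
    intro c
    unfold tmin
    have h1 := neg_inf' Finset.univ univ_nonempty (fun i => c i - x i)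
    have h2 : (Finset.univ.sup' univ_nonempty fun i => -(c i - x i)) =
        Finset.univ.sup' univ_nonempty fun i => x i - c i :=
      Finset.sup'_congr _ rfl (fun i _ => by ring)
    linarith
  rw [step2 a, step2 b, neg_le_neg_iff]
  -- now: univ.sup' (x - a) ≤ univ.sup' (x - b) ↔ I.sup' (x-a) ≤ Iᶜ.sup' (x-b)
  have hsplit : ∀ f : Fin n → ℝ,
      Finset.univ.sup' univ_nonempty f = (I.sup' hI f) ⊔ (Iᶜ.sup' hJ f) := by
    intro f
    rw [← Finset.sup'_union hI hJ f, ]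
    congr 1
    rw [Finset.union_compl]
  rw [hsplit, hsplit]
  set AI := I.sup' hI (fun i => x i - a i)
  set AJ := Iᶜ.sup' hJ (fun i => x i - a i)
  set BI := I.sup' hI (fun i => x i - b i)
  set BJ := Iᶜ.sup' hJ (fun i => x i - b i)
  have hBIlt : BI < AI := by
    rw [Finset.sup'_lt_iff]
    intro i hi
    have h1 : a i < b i := (hmemI i).1 hi
    have h2 : x i - a i ≤ AI := Finset.le_sup' (fun i => x i - a i) hi
    linarith
  have hAJle : AJ ≤ BJ := by
    apply Finset.sup'_le
    intro i hi
    have h1 : b i ≤ a i := (hmemJ i).1 hi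
    have h2 : x i - b i ≤ BJ := Finset.le_sup' (fun i => x i - b i) hi
    linarith
  constructor
  · intro h
    have h1 : AI ≤ BI ⊔ BJ := le_trans (le_sup_left) h
    rcases le_or_gt AI BJ with h2 | h2
    · exact h2
    · rcases (le_sup_iff.1 h1) with h3 | h3
      · linarith
      · exact h3
  · intro h
    apply sup_le
    · exact h.trans le_sup_right
    · exact hAJle.trans le_sup_right
end

section
/- For a finite set of sites S ⊂ H and a ∈ S, the Voronoi region VR_S(a) = {x ∈ H : d_△(x,a) ≤ d_△(x,b) for all b ∈ S} is an intersection of finitely many max-tropical halfspaces, i.e., a tropical polyhedron. -/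
/-- A max-tropical halfspace in the hyperplane `H = {x : Σ x_i = 0}`. -/
def IsTropHalfspace {n : ℕ} (A : Set (Fin n → ℝ)) : Prop :=
  ∃ (I J : Finset (Fin n)) (c d : Fin n → ℝ) (hI : I.Nonempty) (hJ : J.Nonempty),
    Disjoint I J ∧
    A = {x : Fin n → ℝ | (∑ i, x i = 0) ∧
      I.sup' hI (fun i => c i + x i) ≤ J.sup' hJ (fun j => d j + x j)}

lemma inf'_eq_neg_sup'_neg {ι : Type*} (s : Finset ι) (hs : s.Nonempty) (f : ι → ℝ) :
    s.inf' hs f = - s.sup' hs (fun i => -(f i)) := by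
  apply le_antisymm
  · rw [le_neg]
    exact Finset.sup'_le _ _ fun i hi => neg_le_neg (Finset.inf'_le _ hi)
  · apply Finset.le_inf'
    intro i hi
    rw [neg_le]
    exact Finset.le_sup' (fun i => -(f i)) hi

lemma split {n : ℕ} [NeZero n] (c d x : Fin n → ℝ) (I : Finset (Fin n))
    (hIdef : ∀ i, i ∈ I ↔ d i < c i) (hI : I.Nonempty) (hJ : Iᶜ.Nonempty) :
    (Finset.univ.sup' Finset.univ_nonempty (fun i => c i + x i) ≤
      Finset.univ.sup' Finset.univ_nonempty (fun i => d i + x i)) ↔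
    I.sup' hI (fun i => c i + x i) ≤ Iᶜ.sup' hJ (fun i => d i + x i) := by
  constructor
  · intro h
    obtain ⟨j0, _, hj0⟩ := Finset.exists_mem_eq_sup' Finset.univ_nonempty (fun i => d i + x i)
    have hj0J : j0 ∈ Iᶜ := by
      rw [Finset.mem_compl, hIdef]
      intro hlt
      have h1 : c j0 + x j0 ≤ d j0 + x j0 := by
        calc c j0 + x j0 ≤ _ := Finset.le_sup' (fun i => c i + x i) (Finset.mem_univ j0)
        _ ≤ _ := h
        _ = d j0 + x j0 := hj0
      linarith
    apply Finset.sup'_le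
    intro i hi
    calc c i + x i ≤ _ := Finset.le_sup' (fun i => c i + x i) (Finset.mem_univ i)
    _ ≤ _ := h
    _ = d j0 + x j0 := hj0
    _ ≤ _ := Finset.le_sup' (fun i => d i + x i) hj0J
  · intro h
    apply Finset.sup'_le
    intro i _
    by_cases hi : i ∈ I
    · calc c i + x i ≤ _ := Finset.le_sup' (fun i => c i + x i) hi
      _ ≤ _ := h
      _ ≤ _ := Finset.sup'_le _ _ fun j _ => Finset.le_sup' (fun i => d i + x i) (Finset.mem_univ j)
    · have : c i ≤ d i := by have := (hIdef i).not.mp hi; linarith [not_lt.mp this]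
      calc c i + x i ≤ d i + x i := by linarith
      _ ≤ _ := Finset.le_sup' (fun i => d i + x i) (Finset.mem_univ i)

lemma main_equiv {n : ℕ} [NeZero n] (a b : Fin n → ℝ) (hsa : ∑ i, a i = 0)
    (hsb : ∑ i, b i = 0) (hne : b ≠ a) :
    ∃ H : Set (Fin n → ℝ), IsTropHalfspace H ∧
      H = {x : Fin n → ℝ | (∑ i, x i = 0) ∧ dtri x a ≤ dtri x b} := by
  classical
  have hn : (0:ℝ) < n := by exact_mod_cast Nat.pos_of_ne_zero (NeZero.ne n)
  set I : Finset (Fin n) := Finset.univ.filter (fun i => a i < b i) with hIdef0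
  have hIdef : ∀ i, i ∈ I ↔ (fun i => -(b i)) i < (fun i => -(a i)) i := by
    intro i; simp [hIdef0]
  have hI : I.Nonempty := by
    by_contra hemp
    apply hne
    have hle : ∀ i ∈ Finset.univ, b i ≤ a i := by
      intro i _
      by_contra hlt
      exact hemp ⟨i, by simp [hIdef0, lt_of_not_ge hlt]⟩
    have := (Finset.sum_eq_sum_iff_of_le hle).mp (by rw [hsb, hsa])
    funext i; exact this i (Finset.mem_univ i)
  have hJ : Iᶜ.Nonempty := by
    by_contra hemp
    rw [Finset.not_nonempty_iff_eq_empty] at hemp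
    have hall : ∀ i ∈ Finset.univ, a i < b i := by
      intro i _
      by_contra hge
      have : i ∈ Iᶜ := by simp [hIdef0]; exact not_lt.mp hge
      simp [hemp] at this
    have := Finset.sum_lt_sum_of_nonempty Finset.univ_nonempty hall
    rw [hsa, hsb] at this; exact lt_irrefl (0:ℝ) this
  refine ⟨_, ⟨I, Iᶜ, fun i => -(a i), fun i => -(b i), hI, hJ, disjoint_compl_right, rfl⟩, ?_⟩
  ext x
  simp only [Set.mem_setOf_eq]
  refine and_congr_right fun hx => ?_
  have key : (dtri x a ≤ dtri x b) ↔
      (Finset.univ.sup' Finset.univ_nonempty (fun i => -(a i) + x i) ≤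
        Finset.univ.sup' Finset.univ_nonempty (fun i => -(b i) + x i)) := by
    unfold dtri tmin
    have hsum : ∑ i, (a i - x i) = ∑ i, (b i - x i) := by
      rw [Finset.sum_sub_distrib, Finset.sum_sub_distrib, hsa, hsb]
    rw [hsum, sub_le_sub_iff_left, mul_le_mul_iff_right₀ hn,
        inf'_eq_neg_sup'_neg, inf'_eq_neg_sup'_neg, neg_le_neg_iff]
    simp only [neg_sub]
    simp only [sub_eq_neg_add]
  exact (key.trans (split (fun i => -(a i)) (fun i => -(b i)) x I hIdef hI hJ)).symm

theorem stmt7 {n : ℕ} [NeZero n] (S : Set (Fin n → ℝ)) (hfin : S.Finite)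
    (hSH : ∀ s ∈ S, ∑ i, s i = 0) (a : Fin n → ℝ) (ha : a ∈ S) :
    ∃ (k : ℕ) (Hs : Fin k → Set (Fin n → ℝ)),
      (∀ j, IsTropHalfspace (Hs j)) ∧
      {x : Fin n → ℝ | (∑ i, x i = 0) ∧ ∀ b ∈ S, dtri x a ≤ dtri x b} =
        {x : Fin n → ℝ | ∑ i, x i = 0} ∩ ⋂ j, Hs j := by
  classical
  set T : Finset (Fin n → ℝ) := hfin.toFinset.erase a with hTdef
  have hmem : ∀ j : Fin T.card, (↑(T.equivFin.symm j) : Fin n → ℝ) ∈ T := fun j =>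
    (T.equivFin.symm j).2
  have key : ∀ j : Fin T.card, ∃ H : Set (Fin n → ℝ), IsTropHalfspace H ∧
      H = {x : Fin n → ℝ | (∑ i, x i = 0) ∧
        dtri x a ≤ dtri x (↑(T.equivFin.symm j) : Fin n → ℝ)} := by
    intro j
    obtain ⟨hne, hbS⟩ := Finset.mem_erase.mp (hmem j)
    exact main_equiv a _ (hSH a ha) (hSH _ (hfin.mem_toFinset.mp hbS)) hne
  choose Hs hHs hHeq using key
  refine ⟨T.card, Hs, hHs, ?_⟩
  ext x
  simp only [Set.mem_setOf_eq, Set.mem_inter_iff, Set.mem_iInter, hHeq]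
  constructor
  · rintro ⟨hx, hall⟩
    refine ⟨hx, fun j => ⟨hx, hall _ ?_⟩⟩
    exact hfin.mem_toFinset.mp (Finset.mem_of_mem_erase (hmem j))
  · rintro ⟨hx, hall⟩
    refine ⟨hx, fun b hb => ?_⟩
    by_cases hba : b = a
    · subst hba; exact le_refl _
    · have hbT : b ∈ T := Finset.mem_erase.mpr ⟨hba, hfin.mem_toFinset.mpr hb⟩
      have := (hall (T.equivFin ⟨b, hbT⟩)).2
      simpa using this
end

section
/- Let S ⊂ H be a discrete set in general position (for any distinct a,b ∈ S and every i, a_i ≠ b_i), and let a ∈ S. Then the Voronoi region VR_S(a) equals the closure of its interior. -/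
/-- The hyperplane `H = {x ∈ ℝ^n : Σ x_i = 0}` as a topological subspace. -/
def Hyp (n : ℕ) : Type := {x : Fin n → ℝ // ∑ i, x i = 0}

instance (n : ℕ) : TopologicalSpace (Hyp n) :=
  instTopologicalSpaceSubtype

namespace Stmt10Aux

variable {n : ℕ} [NeZero n]

noncomputable def Fm (b x : Hyp n) : ℝ := tmin (fun i => b.1 i - x.1 i)

lemma sum_sub_zero (x b : Hyp n) : ∑ i, (b.1 i - x.1 i) = 0 := by
  rw [Finset.sum_sub_distrib, b.2, x.2, sub_zero]

lemma dtri_eq (x b : Hyp n) : dtri x.1 b.1 = -((n : ℝ) * Fm b x) := by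
  unfold dtri Fm
  rw [sum_sub_zero]
  ring

lemma npos : (0:ℝ) < n := by
  exact_mod_cast Nat.pos_of_ne_zero (NeZero.ne n)

lemma dtri_le_iff (x b c : Hyp n) :
    dtri x.1 b.1 ≤ dtri x.1 c.1 ↔ Fm c x ≤ Fm b x := by
  rw [dtri_eq, dtri_eq, neg_le_neg_iff, mul_le_mul_iff_right₀ npos]

lemma Fm_le (b x : Hyp n) (i : Fin n) : Fm b x ≤ b.1 i - x.1 i :=
  Finset.inf'_le _ (Finset.mem_univ i)

lemma exists_Fm (b x : Hyp n) : ∃ i, Fm b x = b.1 i - x.1 i := by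
  obtain ⟨i, -, h⟩ := Finset.exists_mem_eq_inf' (Finset.univ_nonempty)
    (fun i => b.1 i - x.1 i)
  exact ⟨i, h⟩

lemma Fm_nonpos (b x : Hyp n) : Fm b x ≤ 0 := by
  by_contra h
  push_neg at h
  have h2 : (0:ℝ) < ∑ i, (b.1 i - x.1 i) :=
    Finset.sum_pos (fun i _ => lt_of_lt_of_le h (Fm_le b x i)) Finset.univ_nonempty
  rw [sum_sub_zero] at h2
  exact lt_irrefl _ h2

lemma Fm_lip (b x y : Hyp n) : Fm b y ≤ Fm b x + ‖x.1 - y.1‖ := by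
  obtain ⟨i, hi⟩ := exists_Fm b x
  have h1 : Fm b y ≤ b.1 i - y.1 i := Fm_le b y i
  have h2 : x.1 i - y.1 i ≤ ‖x.1 - y.1‖ := by
    have := norm_le_pi_norm (x.1 - y.1) i
    simp only [Pi.sub_apply, Real.norm_eq_abs] at this
    exact (le_abs_self _).trans this
  have : b.1 i - y.1 i = (b.1 i - x.1 i) + (x.1 i - y.1 i) := by ring
  rw [this] at h1
  rw [hi]
  linarith

lemma norm_le_Fm (b x : Hyp n) : ‖x.1 - b.1‖ ≤ n * (-Fm b x) := by
  have hm := Fm_nonpos b x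
  have hn1 : (1:ℝ) ≤ n := by exact_mod_cast Nat.one_le_iff_ne_zero.mpr (NeZero.ne n)
  have hnn : (0:ℝ) ≤ (n:ℝ) * (-Fm b x) := by nlinarith
  rw [pi_norm_le_iff_of_nonneg hnn]
  intro i
  rw [Pi.sub_apply, Real.norm_eq_abs, abs_le]
  constructor
  · -- -(n * -Fm) ≤ x_i - b_i, i.e. b_i - x_i ≤ n * (-Fm)
    have hsum : ∑ j ∈ Finset.univ.erase i, (b.1 j - x.1 j) = -(b.1 i - x.1 i) := by
      rw [Finset.sum_erase_eq_sub (Finset.mem_univ i), sum_sub_zero]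
      ring
    have hcard : ((Finset.univ.erase i).card • Fm b x : ℝ) ≤
        ∑ j ∈ Finset.univ.erase i, (b.1 j - x.1 j) :=
      Finset.card_nsmul_le_sum _ _ _ (fun j _ => Fm_le b x j)
    rw [hsum, nsmul_eq_mul] at hcard
    have hcle : ((Finset.univ.erase i).card : ℝ) ≤ n := by
      have : (Finset.univ.erase i).card ≤ n := by
        calc (Finset.univ.erase i).card ≤ Finset.univ.card := Finset.card_erase_le
          _ = n := Finset.card_univ.trans (Fintype.card_fin n)
      exact_mod_cast this
    nlinarith
  · -- x_i - b_i ≤ n * (-Fm)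
    have h1 : Fm b x ≤ b.1 i - x.1 i := Fm_le b x i
    nlinarith

lemma inf'_mul {c : ℝ} (hc : 0 ≤ c) (g : Fin n → ℝ) :
    Finset.univ.inf' Finset.univ_nonempty (fun i => c * g i) =
      c * Finset.univ.inf' Finset.univ_nonempty g := by
  apply le_antisymm
  · obtain ⟨i, -, hi⟩ := Finset.exists_mem_eq_inf' (Finset.univ_nonempty (α := Fin n)) g
    rw [hi]
    exact Finset.inf'_le _ (Finset.mem_univ i)
  · apply Finset.le_inf'
    intro i _
    exact mul_le_mul_of_nonneg_left (Finset.inf'_le _ (Finset.mem_univ i)) hc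

noncomputable def seg (x a : Hyp n) (t : ℝ) : Hyp n :=
  ⟨fun i => x.1 i + t * (a.1 i - x.1 i), by
    rw [Finset.sum_add_distrib, ← Finset.mul_sum, sum_sub_zero, x.2]
    ring⟩

@[simp] lemma seg_apply (x a : Hyp n) (t : ℝ) (i : Fin n) :
    (seg x a t).1 i = x.1 i + t * (a.1 i - x.1 i) := rfl

lemma Fm_seg_a (x a : Hyp n) {t : ℝ} (ht : t ≤ 1) :
    Fm a (seg x a t) = (1 - t) * Fm a x := by
  have h : (fun i => a.1 i - (seg x a t).1 i) = fun i => (1 - t) * (a.1 i - x.1 i) := by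
    funext i
    simp only [seg_apply]
    ring
  unfold Fm tmin
  rw [h, inf'_mul (by linarith)]

lemma Fm_seg_le (x a b : Hyp n) {t : ℝ} (ht : 0 ≤ t) :
    Fm b (seg x a t) ≤ Fm b x - t * Fm a x := by
  obtain ⟨i, hi⟩ := exists_Fm b x
  have h1 : Fm b (seg x a t) ≤ b.1 i - (seg x a t).1 i := Fm_le _ _ i
  have h2 : b.1 i - (seg x a t).1 i = (b.1 i - x.1 i) - t * (a.1 i - x.1 i) := by
    simp only [seg_apply]; ring
  have h3 : Fm a x ≤ a.1 i - x.1 i := Fm_le _ _ i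
  nlinarith

lemma cont_inf' {ι : Type*} {s : Finset ι} (hs : s.Nonempty) {X : Type*} [TopologicalSpace X]
    (f : ι → X → ℝ) (hf : ∀ i, Continuous (f i)) :
    Continuous (fun z => s.inf' hs (fun i => f i z)) := by
  induction hs using Finset.Nonempty.cons_induction with
  | singleton i => simpa using hf i
  | cons i s hi hs ih =>
      have h : (fun z => (Finset.cons i s hi).inf' (Finset.cons_nonempty hi) fun j => f j z)
          = fun z => min (f i z) (s.inf' hs fun j => f j z) := by
        funext z
        rw [Finset.inf'_cons]
      rw [h]
      exact (hf i).min ih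

lemma cont_val : Continuous (fun x : Hyp n => x.1) := continuous_subtype_val

lemma cont_Fm (b : Hyp n) : Continuous (fun x : Hyp n => Fm b x) := by
  unfold Fm tmin
  exact cont_inf' _ _ (fun i => continuous_const.sub ((continuous_apply i).comp cont_val))

lemma finite_ball (S : Set (Hyp n)) (hdisc : ∀ x : Hyp n, ¬ AccPt x (Filter.principal S))
    (x : Hyp n) (R : ℝ) : {b | b ∈ S ∧ ‖b.1 - x.1‖ ≤ R}.Finite := by
  by_contra hinf
  have hinf2 : Set.Infinite {b | b ∈ S ∧ ‖b.1 - x.1‖ ≤ R} := hinf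
  have hclosed : IsClosed {y : Fin n → ℝ | ∑ i, y i = 0} :=
    isClosed_eq (by fun_prop) continuous_const
  have hce : Topology.IsClosedEmbedding (fun y : Hyp n => y.1) :=
    Topology.IsClosedEmbedding.subtypeVal hclosed
  have hK : IsCompact ((fun y : Hyp n => y.1) ⁻¹' Metric.closedBall x.1 R) :=
    hce.isCompact_preimage (isCompact_closedBall _ _)
  obtain ⟨z, hz, hacc⟩ := hinf2.exists_accPt_of_subset_isCompact hK
    (fun b hb => by
      simp only [Set.mem_preimage, Metric.mem_closedBall, dist_eq_norm]
      exact hb.2)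
  exact hdisc z (hacc.mono (Filter.principal_mono.2 (fun b hb => hb.1)))

end Stmt10Aux
open Stmt10Aux

theorem stmt10 {n : ℕ} [NeZero n] (S : Set (Hyp n))
    (hdisc : ∀ x : Hyp n, ¬ AccPt x (Filter.principal S))
    (hgen : ∀ a ∈ S, ∀ b ∈ S, a ≠ b → ∀ i, (a : Hyp n).1 i ≠ (b : Hyp n).1 i)
    (a : Hyp n) (ha : a ∈ S) :
    {x : Hyp n | ∀ b ∈ S, dtri x.1 a.1 ≤ dtri x.1 b.1} =
      closure (interior {x : Hyp n | ∀ b ∈ S, dtri x.1 a.1 ≤ dtri x.1 b.1}) := by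
  set VR := {x : Hyp n | ∀ b ∈ S, dtri x.1 a.1 ≤ dtri x.1 b.1} with hVRdef
  have hVR' : VR = {x : Hyp n | ∀ b ∈ S, Fm b x ≤ Fm a x} := by
    ext x
    simp only [hVRdef, Set.mem_setOf_eq]
    exact forall₂_congr fun b _ => dtri_le_iff x a b
  set U := {x : Hyp n | ∀ b ∈ S, b ≠ a → Fm b x < Fm a x} with hUdef
  -- VR is closed
  have hVRclosed : IsClosed VR := by
    rw [hVR']
    have h : {x : Hyp n | ∀ b ∈ S, Fm b x ≤ Fm a x} =
        ⋂ b ∈ S, {x : Hyp n | Fm b x ≤ Fm a x} := by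
      ext x; simp
    rw [h]
    exact isClosed_biInter fun b _ => isClosed_le (cont_Fm b) (cont_Fm a)
  -- U is open
  have hUopen : IsOpen U := by
    rw [isOpen_iff_mem_nhds]
    intro u hu
    set m' := Fm a u with hm'
    have hfin : {b | b ∈ S ∧ ‖b.1 - u.1‖ ≤ n * (|m'| + 3)}.Finite :=
      finite_ball S hdisc u _
    classical
    set E : Finset ℝ := insert (1:ℝ) ((hfin.toFinset.erase a).image fun b => (m' - Fm b u)/2)
      with hE
    have hEne : E.Nonempty := ⟨1, Finset.mem_insert_self _ _⟩
    set ε := E.min' hEne with hεdef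
    have hεpos : 0 < ε := by
      rw [hεdef, Finset.lt_min'_iff]
      intro y hy
      rcases Finset.mem_insert.1 hy with rfl | hy
      · norm_num
      · obtain ⟨b, hb, rfl⟩ := Finset.mem_image.1 hy
        have hbS : b ∈ S := (hfin.mem_toFinset.1 (Finset.mem_of_mem_erase hb)).1
        have hba : b ≠ a := Finset.ne_of_mem_erase hb
        have := hu b hbS hba
        rw [← hm'] at this
        linarith
    have hε1 : ε ≤ 1 := Finset.min'_le _ _ (Finset.mem_insert_self _ _)
    have hball : (fun y : Hyp n => y.1) ⁻¹' Metric.ball u.1 ε ∈ nhds u :=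
      (cont_val.continuousAt).preimage_mem_nhds (Metric.ball_mem_nhds _ hεpos)
    apply Filter.mem_of_superset hball
    intro y hy
    simp only [Set.mem_preimage, Metric.mem_ball, dist_eq_norm] at hy
    intro b hbS hba
    have l1 : Fm b y ≤ Fm b u + ‖u.1 - y.1‖ := Fm_lip b u y
    have l2 : Fm a u ≤ Fm a y + ‖y.1 - u.1‖ := Fm_lip a y u
    have hnorm : ‖u.1 - y.1‖ = ‖y.1 - u.1‖ := norm_sub_rev _ _
    by_cases hbT : ‖b.1 - u.1‖ ≤ n * (|m'| + 3)
    · have hbE : (m' - Fm b u)/2 ∈ E := by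
        rw [hE]
        refine Finset.mem_insert_of_mem (Finset.mem_image.2 ⟨b, ?_, rfl⟩)
        exact Finset.mem_erase.2 ⟨hba, hfin.mem_toFinset.2 ⟨hbS, hbT⟩⟩
      have hεb : ε ≤ (m' - Fm b u)/2 := Finset.min'_le _ _ hbE
      linarith
    · push_neg at hbT
      have l3 : ‖u.1 - b.1‖ ≤ n * (-Fm b u) := norm_le_Fm b u
      have hnormub : ‖b.1 - u.1‖ = ‖u.1 - b.1‖ := norm_sub_rev _ _
      have hnp : (0:ℝ) < n := npos
      have hkey : |m'| + 3 < -Fm b u := by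
        rw [hnormub] at hbT
        nlinarith
      have habs : -|m'| ≤ m' := neg_abs_le m'
      have habs2 : m' ≤ |m'| := le_abs_self m'
      linarith
  -- U ⊆ VR
  have hUsub : U ⊆ VR := by
    rw [hVR']
    intro x hx b hb
    rcases eq_or_ne b a with rfl | h
    · exact le_refl _
    · exact (hx b hb h).le
  -- VR ⊆ closure U
  have hdense : VR ⊆ closure U := by
    intro x hx
    have hx' : ∀ b ∈ S, Fm b x ≤ Fm a x := by rw [hVR'] at hx; exact hx
    rw [mem_closure_iff_nhds]
    intro V hV
    obtain ⟨ε, hεpos, hball⟩ : ∃ ε > 0, (fun y : Hyp n => y.1) ⁻¹' Metric.ball x.1 ε ⊆ V := by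
      obtain ⟨W, hW, hWsub⟩ := (mem_nhds_subtype {y : Fin n → ℝ | ∑ i, y i = 0} x V).1 hV
      obtain ⟨ε, hε, hballW⟩ := Metric.mem_nhds_iff.1 hW
      exact ⟨ε, hε, fun y hy => hWsub (hballW hy)⟩
    set m := Fm a x with hm
    have hactfin : {b | b ∈ S ∧ ‖b.1 - x.1‖ ≤ n * (-m)}.Finite :=
      finite_ball S hdisc x _
    classical
    set BadAll : Finset ℝ := (hactfin.toFinset.erase a).biUnion
      (fun b => Finset.univ.image
        (fun i => (m - (b.1 i - x.1 i)) / (x.1 i - a.1 i + m))) with hBad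
    set N := ‖a.1 - x.1‖ with hN
    have hNpos : (0:ℝ) < N + 1 := by positivity
    set δ : ℝ := min (1/2) (ε / (N + 1)) with hδdef
    have hδpos : 0 < δ := by
      apply lt_min (by norm_num)
      positivity
    have hne : ((Set.Ioo (0:ℝ) δ) \ (BadAll : Set ℝ)).Nonempty :=
      ((Set.Ioo_infinite hδpos).diff (BadAll.finite_toSet)).nonempty
    obtain ⟨t, ⟨ht0, htδ⟩, htbad⟩ := hne
    have ht1 : t ≤ 1 := by
      have : δ ≤ 1/2 := min_le_left _ _
      linarith
    refine ⟨seg x a t, hball ?_, ?_⟩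
    · -- in the ball
      have hsub : (seg x a t).1 - x.1 = t • (a.1 - x.1) := by
        funext i
        simp only [Pi.sub_apply, Pi.smul_apply, seg_apply, smul_eq_mul]
        ring
      simp only [Set.mem_preimage, Metric.mem_ball, dist_eq_norm, hsub, norm_smul,
        Real.norm_eq_abs, abs_of_pos ht0]
      have htε : t < ε / (N + 1) := lt_of_lt_of_le htδ (min_le_right _ _)
      calc t * ‖a.1 - x.1‖ = t * N := by rw [hN]
        _ ≤ t * (N + 1) := by nlinarith
        _ < ε := by
            rw [lt_div_iff₀ hNpos] at htε
            exact htε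
    · -- in U
      intro b hbS hba
      have hble : Fm b x ≤ m := hx' b hbS
      have hsegle : Fm b (seg x a t) ≤ Fm b x - t * m := Fm_seg_le x a b ht0.le
      have hsega : Fm a (seg x a t) = (1 - t) * m := Fm_seg_a x a ht1
      rcases lt_or_eq_of_le hble with hlt | heq
      · rw [hsega]
        nlinarith
      · -- active case
        have hbact : b ∈ hactfin.toFinset.erase a := by
          refine Finset.mem_erase.2 ⟨hba, hactfin.mem_toFinset.2 ⟨hbS, ?_⟩⟩
          have h2 := norm_le_Fm b x
          rw [heq] at h2
          rw [norm_sub_rev]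
          exact h2
        have hneq : Fm b (seg x a t) ≠ m - t * m := by
          intro hcontra
          apply htbad
          obtain ⟨i, hi⟩ := exists_Fm b (seg x a t)
          have hEq : (b.1 i - x.1 i) - t * (a.1 i - x.1 i) = m - t * m := by
            rw [← hcontra, hi]
            simp only [seg_apply]
            ring
          have hab : a.1 i ≠ b.1 i := hgen a ha b hbS (Ne.symm hba) i
          have hc : x.1 i - a.1 i + m ≠ 0 := by
            intro hc0
            apply hab
            have hbx : b.1 i - x.1 i = m := by linear_combination hEq - t * hc0
            have hax : a.1 i - x.1 i = m := by linear_combination -hc0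
            linarith
          have : (m - (b.1 i - x.1 i)) / (x.1 i - a.1 i + m) = t := by
            rw [div_eq_iff hc]
            linear_combination -hEq
          rw [hBad]
          simp only [Finset.coe_biUnion, Set.mem_iUnion, Finset.mem_coe]
          exact ⟨b, hbact, Finset.mem_image.2 ⟨i, Finset.mem_univ i, this⟩⟩
        have hle2 : Fm b (seg x a t) ≤ m - t * m := by
          rw [heq] at hsegle
          exact hsegle
        rw [hsega]
        have h12 : (1 - t) * m = m - t * m := by ring
        rw [h12]
        exact lt_of_le_of_ne hle2 hneq
  apply Set.Subset.antisymm
  · exact fun x hx => closure_mono (interior_maximal hUsub hUopen) (hdense hx)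
  · calc closure (interior VR) ⊆ closure VR := closure_mono interior_subset
      _ = VR := hVRclosed.closure_eq
end

section
/- Let G be a subset of R^n_{≥0} such that each coordinate projection π_i(G) ⊂ R is a discrete set. Then G has only finitely many nondominated points, where x ∈ G is nondominated if there is no y ∈ G \ {x} with x ≤ y coordinatewise. -/
theorem stmt12 {n : ℕ} (G : Set (Fin n → ℝ))
    (hG : ∀ x ∈ G, ∀ i, 0 ≤ x i)
    (hdisc : ∀ i : Fin n, ∀ t : ℝ, ¬ AccPt t (Filter.principal ((fun x : Fin n → ℝ => x i) '' G))) :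
    {x ∈ G | ∀ y ∈ G, (∀ i, x i ≤ y i) → y = x}.Finite := by
  set s : Fin n → Set ℝ := fun i => (fun x : Fin n → ℝ => x i) '' G with hs
  -- each projection is well-founded under <
  have hwf : ∀ i, (s i).IsWF := by
    intro i
    rw [Set.isWF_iff_no_descending_seq]
    intro f hf hmem
    -- f is strictly decreasing, bounded below by 0
    have hbdd : BddBelow (Set.range f) := by
      refine ⟨0, ?_⟩
      rintro _ ⟨k, rfl⟩
      obtain ⟨x, hxG, hx⟩ := hmem k
      exact hx ▸ hG x hxG i
    have htend : Filter.Tendsto f Filter.atTop (nhds (⨅ k, f k)) :=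
      tendsto_atTop_ciInf hf.antitone hbdd
    refine hdisc i (⨅ k, f k) ?_
    rw [accPt_iff_nhds]
    intro U hU
    have := htend.eventually (eventually_mem_nhds_iff.mpr hU)
    obtain ⟨k, hk⟩ := this.exists
    refine ⟨f k, ⟨mem_of_mem_nhds hk, hmem k⟩, ?_⟩
    have hlt : (⨅ m, f m) < f k := lt_of_le_of_lt (ciInf_le hbdd (k+1)) (hf (Nat.lt_succ_self k))
    exact (ne_of_lt hlt).symm
  -- subtypes are well-ordered
  haveI hlt : ∀ i, WellFoundedLT ↥(s i) := fun i => ⟨hwf i⟩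
  haveI : ∀ i, IsWellOrder ↥(s i) (· < ·) := fun i => by haveI := hlt i; infer_instance
  -- Dickson's lemma
  have hpwo : (Set.univ : Set (∀ i, ↥(s i))).IsPWO := Set.isPWO_of_wellQuasiOrderedLE _
  -- push forward via the monotone coordinate-wise coercion
  have himg : ((fun (f : ∀ i, ↥(s i)) (i : Fin n) => (f i : ℝ)) '' Set.univ).IsPWO :=
    hpwo.image_of_monotone (fun f g hfg i => hfg i)
  have hsub : {x ∈ G | ∀ y ∈ G, (∀ i, x i ≤ y i) → y = x} ⊆
      (fun (f : ∀ i, ↥(s i)) (i : Fin n) => (f i : ℝ)) '' Set.univ := by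
    rintro x ⟨hxG, -⟩
    exact ⟨fun i => ⟨x i, ⟨x, hxG, rfl⟩⟩, Set.mem_univ _, rfl⟩
  have hpwo' : {x ∈ G | ∀ y ∈ G, (∀ i, x i ≤ y i) → y = x}.IsPWO := himg.mono hsub
  refine IsAntichain.finite_of_partiallyWellOrderedOn ?_ hpwo'
  rintro x ⟨hxG, hx⟩ y ⟨hyG, -⟩ hxy hle
  exact hxy (hx y hyG hle).symm
end

section
/- The set S = {(ln k, -ln k) : k ∈ Z_{>0}} ⊂ R^2 is super-discrete (both coordinate projections are discrete in R), but for every r > 0 there exist distinct points s, s' ∈ S with d_△(s,s') < r; i.e., S is not uniformly separated. -/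
open Topology


lemma tmin_two (f : Fin 2 → ℝ) : tmin f = min (f 0) (f 1) := by
  simp [tmin, show (Finset.univ : Finset (Fin 2)) = {0, 1} from rfl]

lemma not_accPt_T (t : ℝ) :
    ¬ AccPt t (Filter.principal {y : ℝ | ∃ k : ℕ, 0 < k ∧ |y| = Real.log k}) := by
  set T : Set ℝ := {y : ℝ | ∃ k : ℕ, 0 < k ∧ |y| = Real.log k}
  intro h
  have hfin : (T ∩ Metric.ball t 1).Finite := by
    set N : ℕ := ⌈Real.exp (|t| + 1)⌉₊
    have hsub : T ∩ Metric.ball t 1 ⊆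
        (fun k : ℕ => Real.log k) '' (Set.Iic N) ∪
        (fun k : ℕ => -Real.log k) '' (Set.Iic N) := by
      rintro y ⟨⟨k, hk, hky⟩, hball⟩
      have hyb : |y| ≤ |t| + 1 := by
        have := Metric.mem_ball.mp hball
        rw [Real.dist_eq] at this
        have : |y - t| < 1 := this
        calc |y| = |(y - t) + t| := by ring_nf
        _ ≤ |y - t| + |t| := abs_add_le _ _
        _ ≤ |t| + 1 := by linarith
      have hkN : k ≤ N := by
        have h1 : Real.log k ≤ |t| + 1 := hky ▸ hyb
        have h2 : (k : ℝ) ≤ Real.exp (|t| + 1) := by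
          calc (k : ℝ) ≤ Real.exp (Real.log k) := by
                rw [Real.exp_log (by exact_mod_cast hk)]
          _ ≤ Real.exp (|t| + 1) := Real.exp_le_exp.mpr h1
        exact_mod_cast h2.trans (Nat.le_ceil _)
      rcases abs_cases y with ⟨h1, _⟩ | ⟨h1, _⟩
      · exact Or.inl ⟨k, hkN, by simpa [h1] using hky.symm⟩
      · exact Or.inr ⟨k, hkN, by simpa [← hky, h1] using rfl⟩
    exact Set.Finite.subset (((Set.finite_Iic N).image _).union ((Set.finite_Iic N).image _)) hsub
  have hFfin : ((T ∩ Metric.ball t 1) \ {t}).Finite := hfin.diff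
  have hFcl : IsClosed ((T ∩ Metric.ball t 1) \ {t}) := hFfin.isClosed
  have htF : t ∉ (T ∩ Metric.ball t 1) \ {t} := fun h => h.2 rfl
  have hU : ((T ∩ Metric.ball t 1) \ {t})ᶜ ∩ Metric.ball t 1 ∈ 𝓝 t :=
    Filter.inter_mem (hFcl.isOpen_compl.mem_nhds htF)
      (Metric.ball_mem_nhds t one_pos)
  obtain ⟨y, ⟨hyU, hyT⟩, hyt⟩ := accPt_iff_nhds.mp h _ hU
  exact hyU.1 ⟨⟨hyT, hyU.2⟩, hyt⟩

theorem stmt15 :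
    (∀ i : Fin 2, ∀ t : ℝ, ¬ AccPt t (Filter.principal
        ((fun x : Fin 2 → ℝ => x i) ''
          {p : Fin 2 → ℝ | ∃ k : ℕ, 0 < k ∧ p = ![Real.log k, -Real.log k]}))) ∧
    (∀ r : ℝ, 0 < r →
      ∃ s ∈ {p : Fin 2 → ℝ | ∃ k : ℕ, 0 < k ∧ p = ![Real.log k, -Real.log k]},
      ∃ s' ∈ {p : Fin 2 → ℝ | ∃ k : ℕ, 0 < k ∧ p = ![Real.log k, -Real.log k]},
        s ≠ s' ∧ dtri s s' < r) := by
  constructor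
  · intro i t h
    refine not_accPt_T t (h.mono ?_)
    rw [Filter.principal_mono]
    rintro y ⟨p, ⟨k, hk, rfl⟩, rfl⟩
    have hlog : (0:ℝ) ≤ Real.log k :=
      Real.log_nonneg (by exact_mod_cast hk)
    fin_cases i
    · exact ⟨k, hk, by simp [abs_of_nonneg hlog]⟩
    · exact ⟨k, hk, by simp [abs_of_nonneg hlog]⟩
  · intro r hr
    obtain ⟨k, hk⟩ := exists_nat_gt (2 / r)
    have hk0 : 0 < k := by
      have h2 : (0:ℝ) < k := lt_trans (by positivity) hk
      exact_mod_cast h2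
    refine ⟨![Real.log k, -Real.log k], ⟨k, hk0, rfl⟩,
      ![Real.log (k+1), -Real.log (k+1)], ⟨k+1, Nat.succ_pos k, by push_cast; ring_nf⟩, ?_, ?_⟩
    · intro heq
      have := congrFun heq 0
      simp only [Matrix.cons_val_zero] at this
      have : (k : ℝ) = (k + 1 : ℝ) := by
        have h1 : (0:ℝ) < k := by exact_mod_cast hk0
        exact Real.log_injOn_pos (Set.mem_Ioi.mpr h1)
          (Set.mem_Ioi.mpr (by positivity)) (by push_cast at this ⊢; linarith [this])
      linarith
    · have hd : Real.log (k+1) - Real.log k = Real.log ((k+1)/k) := by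
        rw [Real.log_div (by positivity) (by exact_mod_cast hk0.ne')]
      have hk0' : (0:ℝ) < k := by exact_mod_cast hk0
      have hdle : Real.log ((k+1:ℝ)/k) ≤ 1 / k := by
        have := Real.log_le_sub_one_of_pos (show (0:ℝ) < (k+1)/k by positivity)
        have heq : ((k:ℝ)+1)/k - 1 = 1/k := by field_simp; ring
        linarith [heq ▸ this]
      have hlt : 2 * ((1:ℝ)/k) < r := by
        rw [div_lt_iff₀ hr] at hk
        have : 2 < r * k := by linarith
        rw [mul_div_assoc']
        rw [div_lt_iff₀ hk0']
        linarith
      have hd0 : 0 ≤ Real.log (k+1) - Real.log k := by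
        have : Real.log k ≤ Real.log (k+1) := Real.log_le_log (by positivity) (by linarith)
        linarith
      simp only [dtri, tmin_two, Fin.sum_univ_two]
      simp only [Matrix.cons_val_zero, Matrix.cons_val_one, Matrix.head_cons]
      have hmin : min (Real.log (k+1) - Real.log k)
          (-Real.log (k+1) - -Real.log k) = -(Real.log (k+1) - Real.log k) := by
        rw [min_eq_right]; · ring_nf
        · linarith
      rw [hmin]
      push_cast
      have : Real.log ((k:ℝ)+1) - Real.log k ≤ 1/k := by
        rw [hd] at *; push_cast at hdle ⊢; linarith
      linarith
end

section
/- Let S be the set {0} ∪ {(k + a/k, -a/k, -k) : k ∈ Z_{>0}} in H ⊂ R^3 for a fixed real a > 0. Then S is a discrete subset of H, and the Voronoi region VR_S(0) = {x ∈ H : x_1 ≤ max(x_2 + a/k, x_3 + k) for all k ∈ Z_{>0}} is not equal to any finite intersection of the halfspaces {x ∈ H : x_1 ≤ max(x_2 + a/k, x_3 + k)}; none of these countably many inequalities is redundant. -/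
theorem not_accPt_of_injOn_of_forall_eq_intCast {X : Type*} [TopologicalSpace X] [T1Space X]
    {f : X → ℝ} (hf : Continuous f) {S : Set X} (hinj : S.InjOn f) (hint : ∀ s ∈ S, ∃ n : ℤ, f s = n)
    (x : X) : ¬ AccPt x (Filter.principal S) := by
  intro hacc
  set U := f ⁻¹' Metric.ball (f x) (1 / 2)
  have hU : U ∈ nhds x := hf.continuousAt.preimage_mem_nhds (Metric.ball_mem_nhds _ (by norm_num))
  refine Set.Infinite.of_accPt (hacc.nhds_inter hU) (Set.Subsingleton.finite ?_)
  rintro s ⟨hsU, hsS⟩ t ⟨htU, htS⟩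
  obtain ⟨m, hm⟩ := hint s hsS
  obtain ⟨n, hn⟩ := hint t htS
  refine hinj hsS htS ?_
  simp only [U, Set.mem_preimage, Metric.mem_ball, Real.dist_eq, abs_lt, hm, hn] at hsU htU
  have : m = n := by
    have h1 : m < n + 1 := by exact_mod_cast (by linarith : (m : ℝ) < n + 1)
    have h2 : n < m + 1 := by exact_mod_cast (by linarith : (n : ℝ) < m + 1)
    omega
  rw [hm, hn, this]

theorem tmin_fin_three (f : Fin 3 → ℝ) : tmin f = min (f 0) (min (f 1) (f 2)) := by
  simp [tmin, show (Finset.univ : Finset (Fin 3)) = {0, 1, 2} from rfl, Finset.inf'_insert]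

theorem dtri_eq_of_sum_eq {n : ℕ} [NeZero n] {x y : Fin n → ℝ} (h : ∑ i, x i = ∑ i, y i) :
    dtri x y = -(n * tmin fun i => y i - x i) := by
  simp [dtri, Finset.sum_sub_distrib, h]

noncomputable def site (a : ℝ) (k : ℕ) : Fin 3 → ℝ := ![(k : ℝ) + a / k, -(a / k), -(k : ℝ)]

def sites (a : ℝ) : Set (Fin 3 → ℝ) := {0} ∪ {p | ∃ k : ℕ, 0 < k ∧ p = site a k}

theorem sum_site (a : ℝ) (k : ℕ) : ∑ i, site a k i = 0 := by
  simp [site, Fin.sum_univ_three]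

theorem dtri_zero_le_dtri_site_iff {a : ℝ} (ha : 0 ≤ a) {k : ℕ} (hk : 0 < k) {x : Fin 3 → ℝ}
    (hx : ∑ i, x i = 0) :
    dtri x 0 ≤ dtri x (site a k) ↔ x 0 ≤ max (x 1 + a / k) (x 2 + k) := by
  have hk1 : (1 : ℝ) ≤ k := Nat.one_le_cast.mpr hk
  have hak : 0 ≤ a / k := div_nonneg ha k.cast_nonneg
  rw [dtri_eq_of_sum_eq (by simp [hx]), dtri_eq_of_sum_eq (by rw [hx, sum_site])]
  simp only [tmin_fin_three, site, Pi.zero_apply, Matrix.cons_val_zero, Matrix.cons_val_one,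
    Matrix.cons_val_two, Matrix.head_cons, Matrix.tail_cons, neg_le_neg_iff]
  grind

theorem not_accPt_sites (a : ℝ) (x : Fin 3 → ℝ) : ¬ AccPt x (Filter.principal (sites a)) := by
  refine not_accPt_of_injOn_of_forall_eq_intCast (continuous_apply 2) ?_ ?_ x
  · rintro s (rfl | ⟨k, hk, rfl⟩) t (rfl | ⟨m, hm, rfl⟩) h <;>
      simp_all [site, Nat.pos_iff_ne_zero]
  · rintro s (rfl | ⟨k, -, rfl⟩)
    exacts [⟨0, by simp⟩, ⟨-k, by simp [site]⟩]

theorem forall_sites_dtri_le_iff {a : ℝ} (ha : 0 ≤ a) {x : Fin 3 → ℝ} (hx : ∑ i, x i = 0) :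
    (∀ s ∈ sites a, dtri x 0 ≤ dtri x s) ↔ ∀ k : ℕ, 0 < k → x 0 ≤ max (x 1 + a / k) (x 2 + k) := by
  constructor
  · exact fun h k hk => (dtri_zero_le_dtri_site_iff ha hk hx).1 (h _ (Or.inr ⟨k, hk, rfl⟩))
  · rintro h s (rfl | ⟨k, hk, rfl⟩)
    exacts [le_rfl, (dtri_zero_le_dtri_site_iff ha hk hx).2 (h k hk)]

theorem exists_forall_le_max_iff_ne {a : ℝ} (ha : 0 < a) {k : ℕ} (hk : 0 < k) :
    ∃ x : Fin 3 → ℝ, ∑ i, x i = 0 ∧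
      ∀ m : ℕ, 0 < m → (x 0 ≤ max (x 1 + a / m) (x 2 + m) ↔ m ≠ k) := by
  set t : ℝ := k - 1 / 2 with htk
  have ht : 0 < t := by have : (1 : ℝ) ≤ k := Nat.one_le_cast.mpr hk; linarith [htk]
  set c : ℝ := (a / t + (k + 1 / 2)) / 3
  refine ⟨![c, c - a / t, c - (k + 1 / 2)], by simp [Fin.sum_univ_three, c]; ring, ?_⟩
  intro m hm
  simp only [Matrix.cons_val_zero, Matrix.cons_val_one, Matrix.cons_val_two, Matrix.head_cons,
    Matrix.tail_cons]
  rcases lt_trichotomy m k with hmk | rfl | hmk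
  · have hmt : (m : ℝ) ≤ t := by
      have : (m : ℝ) + 1 ≤ k := by exact_mod_cast hmk
      linarith [htk]
    have : a / t ≤ a / m := div_le_div_of_nonneg_left ha.le (Nat.cast_pos.mpr hm) hmt
    simp only [ne_eq, hmk.ne, not_false_eq_true, iff_true]
    exact le_max_of_le_left (by linarith)
  · have : a / m < a / t := div_lt_div_of_pos_left ha ht (by linarith [htk])
    simp only [ne_eq, not_true_eq_false, iff_false, not_le]
    exact max_lt (by linarith) (by linarith)
  · have : (k : ℝ) + 1 ≤ m := by exact_mod_cast hmk
    simp only [ne_eq, hmk.ne', not_false_eq_true, iff_true]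
    exact le_max_of_le_right (by linarith)

theorem stmt17 (a : ℝ) (ha : 0 < a) :
    -- the set of sites
    letI S : Set (Fin 3 → ℝ) :=
      {0} ∪ {p | ∃ k : ℕ, 0 < k ∧ p = ![(k : ℝ) + a / k, -(a / k), -(k : ℝ)]}
    -- S is a discrete subset of H
    (∀ x : Fin 3 → ℝ, (∑ i, x i = 0) → ¬ AccPt x (Filter.principal S)) ∧
    -- the Voronoi region of 0 is cut out by the countably many inequalities
    ({x : Fin 3 → ℝ | (∑ i, x i = 0) ∧ ∀ s ∈ S, dtri x 0 ≤ dtri x s} =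
      {x : Fin 3 → ℝ | (∑ i, x i = 0) ∧
        ∀ k : ℕ, 0 < k → x 0 ≤ max (x 1 + a / k) (x 2 + k)}) ∧
    -- none of the inequalities is redundant
    (∀ k : ℕ, 0 < k → ∃ x : Fin 3 → ℝ, (∑ i, x i = 0) ∧
      (∀ m : ℕ, 0 < m → m ≠ k → x 0 ≤ max (x 1 + a / m) (x 2 + m)) ∧
      ¬ (x 0 ≤ max (x 1 + a / k) (x 2 + k))) ∧
    -- the region is no finite intersection of the halfspaces
    (∀ T : Finset ℕ,
      {x : Fin 3 → ℝ | (∑ i, x i = 0) ∧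
          ∀ k ∈ T, 0 < k → x 0 ≤ max (x 1 + a / k) (x 2 + k)} ≠
        {x : Fin 3 → ℝ | (∑ i, x i = 0) ∧
          ∀ k : ℕ, 0 < k → x 0 ≤ max (x 1 + a / k) (x 2 + k)}) := by
  refine ⟨fun x _ => not_accPt_sites a x,
    Set.ext fun x => and_congr_right (forall_sites_dtri_le_iff ha.le), fun k hk => ?_, ?_⟩
  · obtain ⟨x, hx, hiff⟩ := exists_forall_le_max_iff_ne ha hk
    exact ⟨x, hx, fun m hm => (hiff m hm).2, fun hle => (hiff k hk).1 hle rfl⟩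
  · intro T hT
    obtain ⟨k, hk⟩ := Infinite.exists_notMem_finset (insert 0 T)
    have hk0 : 0 < k := Nat.pos_of_ne_zero fun h => hk (h ▸ Finset.mem_insert_self 0 T)
    obtain ⟨x, hx, hiff⟩ := exists_forall_le_max_iff_ne ha hk0
    have hxT : x ∈ {x : Fin 3 → ℝ | (∑ i, x i = 0) ∧
        ∀ m ∈ T, 0 < m → x 0 ≤ max (x 1 + a / m) (x 2 + m)} :=
      ⟨hx, fun m hmT hm => (hiff m hm).2 fun h => hk (h ▸ Finset.mem_insert_of_mem hmT)⟩
    rw [hT] at hxT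
    exact (hiff k hk0).1 (hxT.2 k hk0) rfl
end
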